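/- Fix z, λ ∈ ℂ with z ∉ L, λ ∉ L, z+λ ∉ L and z−λ ∉ L, and regard R⁻_γ(z,λ) as a function of the parameter γ in a neighborhood of 0. Then γ ↦ R⁻_γ(z,λ) is differentiable at γ = 0, R⁻₀(z,λ) = Id, and its derivative at γ = 0 equals (1/2)·(θ′(z)/θ(z))·(h⊗h − Id) + (θ(z+λ)/(θ(z)θ(λ))) E₁,₋₁⊗E₋₁,₁ − (θ(z−λ)/(θ(z)θ(λ))) E₋₁,₁⊗E₁,₋₁, where h = E₁₁ − E₋₁₋₁; i.e., the quasi-classical limit of R⁻ is the classical elliptic dynamical r-matrix (1/2)(θ′/θ)(z) h⊗h + (θ(z+λ)/(θ(z)θ(λ))) e⊗f + (θ(z−λ)/(θ(z)θ(−λ))) f⊗e (with e = E₁,₋₁, f = E₋₁,₁) minus the scalar (1/2)(θ′/θ)(z)·Id. -/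

import Mathlib

noncomputable section
open Complex Matrix Kronecker

/-- The lattice `L = ℤ + τℤ`. -/
def LatSet (τ : ℂ) : Set ℂ := {z | ∃ m n : ℤ, z = (m : ℂ) + (n : ℂ) * τ}

variable {τ : ℂ}

lemma mem_lat_iff (hτ : τ.im ≠ 0) (z : ℂ) :
    z ∈ LatSet τ ↔ (∃ m : ℤ, z.re - z.im / τ.im * τ.re = m) ∧ (∃ n : ℤ, z.im / τ.im = n) := by
  constructor
  · rintro ⟨m, n, rfl⟩
    have him : ((m:ℂ) + n * τ).im = n * τ.im := by
      simp [Complex.add_im, Complex.mul_im]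
    have hre : ((m:ℂ) + n * τ).re = m + n * τ.re := by
      simp [Complex.add_re, Complex.mul_re]
    constructor
    · refine ⟨m, ?_⟩
      rw [him, hre]; field_simp; ring
    · refine ⟨n, ?_⟩
      rw [him]; field_simp
  · rintro ⟨⟨m, hm⟩, ⟨n, hn⟩⟩
    refine ⟨m, n, ?_⟩
    apply Complex.ext
    · have hre : z.re = m + z.im / τ.im * τ.re := by linarith
      have : z.im / τ.im * τ.re = n * τ.re := by rw [hn]
      simp [Complex.add_re, Complex.mul_re]
      rw [hre, this]
    · have : z.im = n * τ.im := by
        field_simp at hn; linarith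
      simp [Complex.add_im, Complex.mul_im, this]

/-- coordinates determine the point -/
lemma coords_inj (hτ : τ.im ≠ 0) {z w : ℂ}
    (h1 : z.re - z.im / τ.im * τ.re = w.re - w.im / τ.im * τ.re)
    (h2 : z.im / τ.im = w.im / τ.im) : z = w := by
  have him : z.im = w.im := by
    field_simp at h2; exact h2
  apply Complex.ext
  · rw [him] at h1; linarith
  · exact him

lemma isClosed_lat (hτ : τ.im ≠ 0) : IsClosed (LatSet τ) := by
  have : LatSet τ = (fun z : ℂ => z.re - z.im / τ.im * τ.re) ⁻¹' (Set.range ((↑) : ℤ → ℝ)) ∩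
      (fun z : ℂ => z.im / τ.im) ⁻¹' (Set.range ((↑) : ℤ → ℝ)) := by
    ext z
    simp only [Set.mem_inter_iff, Set.mem_preimage, Set.mem_range, mem_lat_iff hτ z]
    constructor
    · rintro ⟨⟨m, hm⟩, ⟨n, hn⟩⟩; exact ⟨⟨m, hm.symm⟩, ⟨n, hn.symm⟩⟩
    · rintro ⟨⟨m, hm⟩, ⟨n, hn⟩⟩; exact ⟨⟨m, hm.symm⟩, ⟨n, hn.symm⟩⟩
  rw [this]
  have hc : IsClosed (Set.range ((↑) : ℤ → ℝ)) := Int.isClosedEmbedding_coe_real.isClosed_range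
  have c1 : Continuous (fun z : ℂ => z.re - z.im / τ.im * τ.re) := by fun_prop
  have c2 : Continuous (fun z : ℂ => z.im / τ.im) := by fun_prop
  exact (hc.preimage c1).inter (hc.preimage c2)

lemma int_close (m m' : ℤ) (h : |(m:ℝ) - m'| < 1/2) : m = m' := by
  by_contra hne
  have h1 : (1:ℤ) ≤ |m - m'| := Int.one_le_abs (sub_ne_zero.mpr hne)
  have h2 : (1:ℝ) ≤ |(m:ℝ) - m'| := by
    have h3 : ((1:ℤ):ℝ) ≤ ((|m - m'| : ℤ) : ℝ) := Int.cast_le.mpr h1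
    rw [Int.cast_abs] at h3
    push_cast at h3
    linarith [h3]
  linarith

/-- lattice points are isolated -/
lemma eventually_not_lat (hτ : τ.im ≠ 0) (p : ℂ) :
    ∀ᶠ w in nhdsWithin p {p}ᶜ, w ∉ LatSet τ := by
  by_cases hp : p ∈ LatSet τ
  · have c1 : Continuous (fun z : ℂ => z.re - z.im / τ.im * τ.re) := by fun_prop
    have c2 : Continuous (fun z : ℂ => z.im / τ.im) := by fun_prop
    have h1 : ∀ᶠ w in nhds p, |((fun z : ℂ => z.re - z.im / τ.im * τ.re) w) -
        (p.re - p.im / τ.im * τ.re)| < 1/2 :=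
      (c1.tendsto p).eventually (eventually_abs_sub_lt _ (by norm_num : (0:ℝ) < 1/2))
    have h2 : ∀ᶠ w in nhds p, |((fun z : ℂ => z.im / τ.im) w) - (p.im / τ.im)| < 1/2 :=
      (c2.tendsto p).eventually (eventually_abs_sub_lt _ (by norm_num : (0:ℝ) < 1/2))
    filter_upwards [nhdsWithin_le_nhds h1, nhdsWithin_le_nhds h2, self_mem_nhdsWithin]
      with w hw1 hw2 hw3
    intro hwL
    apply hw3
    obtain ⟨⟨m, hm⟩, ⟨n, hn⟩⟩ := (mem_lat_iff hτ w).mp hwL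
    obtain ⟨⟨m', hm'⟩, ⟨n', hn'⟩⟩ := (mem_lat_iff hτ p).mp hp
    rw [hm, hm'] at hw1
    rw [hn, hn'] at hw2
    have em : m = m' := int_close _ _ hw1
    have en : n = n' := int_close _ _ hw2
    apply coords_inj hτ (h1 := ?_) (h2 := ?_)
    · rw [hm, hm', em]
    · rw [hn, hn', en]
  · have hmem : {p}ᶜ ∩ (LatSet τ)ᶜ ∈ nhdsWithin p {p}ᶜ := by
      refine Filter.inter_mem self_mem_nhdsWithin ?_
      exact nhdsWithin_le_nhds ((isClosed_lat hτ).isOpen_compl.mem_nhds hp)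
    filter_upwards [hmem] with w hw using hw.2

lemma lat_zero : (0:ℂ) ∈ LatSet τ := ⟨0, 0, by simp⟩

lemma lat_neg {z : ℂ} (h : z ∈ LatSet τ) : -z ∈ LatSet τ := by
  obtain ⟨m, n, rfl⟩ := h; exact ⟨-m, -n, by push_cast; ring⟩

lemma lat_add_one {z : ℂ} : z + 1 ∈ LatSet τ ↔ z ∈ LatSet τ := by
  constructor
  · rintro ⟨m, n, h⟩
    exact ⟨m - 1, n, by push_cast; push_cast at h; linear_combination h⟩
  · rintro ⟨m, n, rfl⟩
    exact ⟨m + 1, n, by push_cast; ring⟩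

lemma lat_add_tau {z : ℂ} : z + τ ∈ LatSet τ ↔ z ∈ LatSet τ := by
  constructor
  · rintro ⟨m, n, h⟩
    exact ⟨m, n - 1, by push_cast; push_cast at h; linear_combination h⟩
  · rintro ⟨m, n, rfl⟩
    exact ⟨m, n + 1, by push_cast; ring⟩

lemma half_not_lat (hτ : 0 < τ.im) : (1/2 : ℂ) ∉ LatSet τ := by
  rintro ⟨m, n, h⟩
  have him : (1/2 : ℂ).im = n * τ.im := by
    rw [h]; simp [Complex.add_im, Complex.mul_im]
  simp at him
  rcases him with h0 | h0
  · subst h0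
    have hre : (1/2 : ℂ).re = (m:ℝ) := by
      rw [h]; simp
    simp at hre
    have : (2 * m : ℤ) = 1 := by
      have := hre.symm
      have h2 : (2:ℝ) * (m:ℝ) = 1 := by rw [this]; norm_num
      exact_mod_cast h2
    omega
  · linarith

/-- `θ` is the theta function of the paper: entire, `θ′(0) = 1`, zero set exactly `L`,
`θ(z+1) = −θ(z)` and `θ(z+τ) = −e^{−iπτ} e^{−2iπz} θ(z)`. -/
def IsTheta (τ : ℂ) (θ : ℂ → ℂ) : Prop :=
  Differentiable ℂ θ ∧ deriv θ 0 = 1 ∧ (∀ z, θ z = 0 ↔ z ∈ LatSet τ) ∧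
    (∀ z, θ (z + 1) = -θ z) ∧
    (∀ z, θ (z + τ) = -Complex.exp (-((Real.pi : ℂ) * Complex.I * τ)) *
      Complex.exp (-(2 * (Real.pi : ℂ) * Complex.I * z)) * θ z)

open scoped Classical in
theorem theta_odd (τ : ℂ) (hτ : 0 < τ.im) (θ : ℂ → ℂ) (hθ : IsTheta τ θ)
    {lam : ℂ} (hlam : lam ∉ LatSet τ) : θ (-lam) = -θ lam := by
  obtain ⟨hdiff, hd0, hzero, h1, h2⟩ := hθ
  have hτ0 : τ.im ≠ 0 := ne_of_gt hτ
  set c : ℂ := -Complex.exp (-((Real.pi : ℂ) * Complex.I * τ)) with hc_def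
  have hc : c ≠ 0 := neg_ne_zero.mpr (Complex.exp_ne_zero _)
  have hc2 : c ^ 2 = Complex.exp (-(2 * (Real.pi : ℂ) * Complex.I * τ)) := by
    rw [hc_def, neg_sq, pow_two, ← Complex.exp_add]
    congr 1; ring
  set u : ℂ → ℂ := fun w => θ w + θ (-w) with hu_def
  have hu_diff : Differentiable ℂ u := by
    apply hdiff.add
    exact hdiff.comp differentiable_neg
  -- periodicity of u
  have hu1 : ∀ w, u (w + 1) = -u w := by
    intro w
    have e1 := h1 w
    have e2' := h1 (-w - 1)
    rw [show -w - 1 + 1 = -w by ring] at e2'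
    simp only [hu_def]
    rw [show -(w+1) = -w - 1 by ring]
    linear_combination e1 + e2'
  have huτ : ∀ w, u (w + τ) = c * Complex.exp (-(2 * (Real.pi : ℂ) * Complex.I * w)) * u w := by
    intro w
    have e1 := h2 w
    have e2' := h2 (-w - τ)
    rw [show -w - τ + τ = -w by ring] at e2'
    have hkey : c * Complex.exp (-(2 * (Real.pi : ℂ) * Complex.I * w)) *
        (c * Complex.exp (-(2 * (Real.pi : ℂ) * Complex.I * (-w - τ)))) = 1 := by
      have : c * Complex.exp (-(2 * (Real.pi : ℂ) * Complex.I * w)) *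
          (c * Complex.exp (-(2 * (Real.pi : ℂ) * Complex.I * (-w - τ))))
          = c ^ 2 * Complex.exp (-(2 * (Real.pi : ℂ) * Complex.I * w) +
              -(2 * (Real.pi : ℂ) * Complex.I * (-w - τ))) := by
        rw [Complex.exp_add]; ring
      rw [this, hc2, ← Complex.exp_add]
      rw [show -(2 * (Real.pi : ℂ) * Complex.I * τ) + (-(2 * (Real.pi : ℂ) * Complex.I * w) +
          -(2 * (Real.pi : ℂ) * Complex.I * (-w - τ))) = 0 by ring, Complex.exp_zero]
    have e3 : θ (-w - τ) = c * Complex.exp (-(2 * (Real.pi : ℂ) * Complex.I * w)) * θ (-w) := by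
      linear_combination (-(c * Complex.exp (-(2 * (Real.pi : ℂ) * Complex.I * w)))) * e2'
        - θ (-w - τ) * hkey
    simp only [hu_def]
    rw [show -(w+τ) = -w - τ by ring, e1, e3]
    ring
  -- the quotient function, extended by 0 over the lattice
  set F : ℂ → ℂ := fun w => if w ∈ LatSet τ then 0 else u w / θ w with hF_def
  have hθne : ∀ {w : ℂ}, w ∉ LatSet τ → θ w ≠ 0 := by
    intro w hw h0
    exact hw ((hzero w).mp h0)
  have hF_per1 : ∀ w, F (w + 1) = F w := by
    intro w
    by_cases hw : w ∈ LatSet τ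
    · simp only [hF_def, if_pos hw, if_pos (lat_add_one.mpr hw)]
    · have hw1 : w + 1 ∉ LatSet τ := fun h => hw (lat_add_one.mp h)
      simp only [hF_def, if_neg hw, if_neg hw1, hu1 w, h1 w, neg_div_neg_eq]
  have hF_perτ : ∀ w, F (w + τ) = F w := by
    intro w
    by_cases hw : w ∈ LatSet τ
    · simp only [hF_def, if_pos hw, if_pos (lat_add_tau.mpr hw)]
    · have hw1 : w + τ ∉ LatSet τ := fun h => hw (lat_add_tau.mp h)
      have hce : c * Complex.exp (-(2 * (Real.pi : ℂ) * Complex.I * w)) ≠ 0 :=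
        mul_ne_zero hc (Complex.exp_ne_zero _)
      simp only [hF_def, if_neg hw, if_neg hw1, huτ w, h2 w]
      rw [mul_div_mul_left _ _ hce]
  have hF_perInt : ∀ (w : ℂ) (m n : ℤ), F (w + m + n * τ) = F w := by
    have hm : ∀ (m : ℤ) (w : ℂ), F (w + m) = F w := by
      intro m
      induction m using Int.induction_on with
      | zero => intro w; simp
      | succ k ih =>
        intro w
        have ihw := ih w
        push_cast at ihw ⊢
        rw [show w + ((k:ℂ) + 1) = (w + (k:ℂ)) + 1 by ring, hF_per1]
        exact ihw
      | pred k ih =>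
        intro w
        have h := hF_per1 (w + (-(k:ℂ) - 1))
        rw [show w + (-(k:ℂ) - 1) + 1 = w + -(k:ℂ) by ring] at h
        have ihw := ih w
        push_cast at ihw ⊢
        rw [show w + (-(k:ℂ) - 1) = w + -(k:ℂ) - 1 by ring] at h ⊢
        rw [← h]
        exact ihw
    have hn : ∀ (n : ℤ) (w : ℂ), F (w + n * τ) = F w := by
      intro n
      induction n using Int.induction_on with
      | zero => intro w; simp
      | succ k ih =>
        intro w
        have ihw := ih w
        push_cast at ihw ⊢
        rw [show w + ((k:ℂ) + 1) * τ = (w + (k:ℂ) * τ) + τ by ring, hF_perτ]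
        exact ihw
      | pred k ih =>
        intro w
        have h := hF_perτ (w + (-(k:ℂ) - 1) * τ)
        rw [show w + (-(k:ℂ) - 1) * τ + τ = w + -(k:ℂ) * τ by ring] at h
        have ihw := ih w
        push_cast at ihw ⊢
        rw [← h]
        exact ihw
    intro w m n
    rw [hn n (w + (m:ℂ)), hm m w]
  -- derivative facts at 0
  have hθ0 : θ 0 = 0 := (hzero 0).mpr lat_zero
  have hdθ : HasDerivAt θ 1 0 := by
    have := (hdiff 0).hasDerivAt
    rwa [hd0] at this
  have hdneg : HasDerivAt (fun w : ℂ => θ (-w)) (-1) 0 := by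
    have h0 : HasDerivAt θ 1 (-(0:ℂ)) := by simpa using hdθ
    have := h0.comp 0 (hasDerivAt_neg (0:ℂ))
    simpa [Function.comp_def] using this
  have hdu : HasDerivAt u 0 0 := by
    have := hdθ.add hdneg
    simpa [hu_def, Pi.add_def] using this
  have hu0 : u 0 = 0 := by simp [hu_def, hθ0]
  -- tendsto of F at punctured 0
  have hslope_u : Filter.Tendsto (slope u 0) (nhdsWithin 0 {(0:ℂ)}ᶜ) (nhds 0) :=
    hasDerivAt_iff_tendsto_slope.mp hdu
  have hslope_θ : Filter.Tendsto (slope θ 0) (nhdsWithin 0 {(0:ℂ)}ᶜ) (nhds 1) :=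
    hasDerivAt_iff_tendsto_slope.mp hdθ
  have htend0 : Filter.Tendsto F (nhdsWithin 0 {(0:ℂ)}ᶜ) (nhds 0) := by
    have hdiv : Filter.Tendsto (fun w => slope u 0 w / slope θ 0 w)
        (nhdsWithin 0 {(0:ℂ)}ᶜ) (nhds 0) := by
      have := hslope_u.div hslope_θ one_ne_zero
      simpa [Pi.div_def] using this
    refine hdiv.congr' ?_
    filter_upwards [eventually_not_lat hτ0 0, self_mem_nhdsWithin] with w hwL hw0
    have hw0' : w ≠ 0 := hw0
    simp only [hF_def, if_neg hwL, slope_def_field]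
    rw [hu0, hθ0, sub_zero, sub_zero, sub_zero]
    have hθw : θ w ≠ 0 := hθne hwL
    field_simp
  -- tendsto of F at any lattice point
  have htendp : ∀ p ∈ LatSet τ, Filter.Tendsto F (nhdsWithin p {p}ᶜ) (nhds 0) := by
    intro p hp
    obtain ⟨m, n, rfl⟩ := hp
    have hshift : ∀ w : ℂ, F w = F (w - ((m:ℂ) + n * τ)) := by
      intro w
      have := hF_perInt (w - ((m:ℂ) + n * τ)) m n
      rw [show w - ((m:ℂ) + n * τ) + m + n * τ = w by ring] at this
      exact this
    have hmap : Filter.Tendsto (fun w : ℂ => w - ((m:ℂ) + n * τ))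
        (nhdsWithin ((m:ℂ) + n * τ) {((m:ℂ) + n * τ)}ᶜ) (nhdsWithin 0 {(0:ℂ)}ᶜ) := by
      rw [tendsto_nhdsWithin_iff]
      constructor
      · have : Filter.Tendsto (fun w : ℂ => w - ((m:ℂ) + n * τ)) (nhds ((m:ℂ) + n * τ))
            (nhds (((m:ℂ) + n * τ) - ((m:ℂ) + n * τ))) :=
          Filter.Tendsto.sub_const Filter.tendsto_id _
        simpa using this.mono_left nhdsWithin_le_nhds
      · filter_upwards [self_mem_nhdsWithin] with w hw
        simpa [sub_eq_zero] using hw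
    have := htend0.comp hmap
    refine this.congr ?_
    intro w
    exact (hshift w).symm
  -- F is differentiable
  have hFdiff_off : ∀ w : ℂ, w ∉ LatSet τ → DifferentiableAt ℂ F w := by
    intro w hw
    have hopen : ∀ᶠ v in nhds w, v ∉ LatSet τ :=
      (isClosed_lat hτ0).isOpen_compl.eventually_mem hw
    have hG : DifferentiableAt ℂ (fun v => u v / θ v) w :=
      (hu_diff w).div (hdiff w) (hθne hw)
    apply hG.congr_of_eventuallyEq
    filter_upwards [hopen] with v hv
    simp [hF_def, if_neg hv]
  have hFdiff : Differentiable ℂ F := by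
    intro w
    by_cases hw : w ∈ LatSet τ
    · apply AnalyticAt.differentiableAt
      apply Complex.analyticAt_of_differentiable_on_punctured_nhds_of_continuousAt
      · filter_upwards [eventually_not_lat hτ0 w] with v hv
        exact hFdiff_off v hv
      · have hFw : F w = 0 := by simp [hF_def, if_pos hw]
        show Filter.Tendsto F (nhds w) (nhds (F w))
        rw [hFw, ← nhdsNE_sup_pure w, Filter.tendsto_sup]
        refine ⟨htendp w hw, ?_⟩
        rw [Filter.tendsto_pure_left]
        intro s hs
        rw [hFw]
        exact mem_of_mem_nhds hs
    · exact hFdiff_off w hw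
  -- F is bounded
  have hmapcont : Continuous (fun pr : ℝ × ℝ => (pr.1 : ℂ) + (pr.2 : ℂ) * τ) := by fun_prop
  have hK : IsCompact ((fun pr : ℝ × ℝ => (pr.1 : ℂ) + (pr.2 : ℂ) * τ) ''
      (Set.Icc 0 1 ×ˢ Set.Icc 0 1)) :=
    (isCompact_Icc.prod isCompact_Icc).image hmapcont
  have hrange : Set.range F ⊆ F '' ((fun pr : ℝ × ℝ => (pr.1 : ℂ) + (pr.2 : ℂ) * τ) ''
      (Set.Icc 0 1 ×ˢ Set.Icc 0 1)) := by
    rintro _ ⟨w, rfl⟩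
    set b : ℝ := w.im / τ.im with hb_def
    set a : ℝ := w.re - b * τ.re with ha_def
    refine ⟨((Int.fract a : ℝ) : ℂ) + ((Int.fract b : ℝ) : ℂ) * τ, ⟨(Int.fract a, Int.fract b),
      ⟨⟨Int.fract_nonneg a, (Int.fract_lt_one a).le⟩,
       ⟨Int.fract_nonneg b, (Int.fract_lt_one b).le⟩⟩, rfl⟩, ?_⟩
    have hw' : w = ((a:ℝ):ℂ) + ((b:ℝ):ℂ) * τ := by
      apply Complex.ext
      · simp only [Complex.add_re, Complex.mul_re, Complex.ofReal_re, Complex.ofReal_im, ha_def]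
        ring
      · simp only [Complex.add_im, Complex.mul_im, Complex.ofReal_re, Complex.ofReal_im, hb_def]
        field_simp; ring
    have hw_eq : w = (((Int.fract a : ℝ) : ℂ) + ((Int.fract b : ℝ) : ℂ) * τ) + (⌊a⌋ : ℂ) + (⌊b⌋ : ℂ) * τ := by
      rw [hw', Int.fract, Int.fract]
      push_cast
      ring
    rw [hw_eq, hF_perInt]
  have hbdd : Bornology.IsBounded (Set.range F) :=
    ((hK.image hFdiff.continuous).isBounded).subset hrange
  -- Liouville
  have hconst := hFdiff.apply_eq_apply_of_bounded hbdd lam (1/2 : ℂ)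
  have hFhalf : F (1/2 : ℂ) = 0 := by
    have hhalf := half_not_lat hτ
    have huhalf : u (1/2 : ℂ) = 0 := by
      have := h1 (-(1/2) : ℂ)
      rw [show (-(1/2) : ℂ) + 1 = 1/2 by ring] at this
      simp only [hu_def]
      rw [show -(1/2 : ℂ) = -(1/2) from rfl]
      linear_combination this
    have hFh : F (1/2 : ℂ) = u (1/2) / θ (1/2) := by
      simp only [hF_def]
      rw [if_neg hhalf]
    rw [hFh, huhalf, zero_div]
  rw [hFhalf] at hconst
  have hFlam : F lam = u lam / θ lam := by simp [hF_def, if_neg hlam]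
  rw [hFlam] at hconst
  have hulam : u lam = 0 := by
    have := hθne hlam
    field_simp at hconst
    simpa using hconst
  have hfin : θ lam + θ (-lam) = 0 := hulam
  linear_combination hfin

/-- Matrix unit `E_{ab}` on `V = ℂ²`; index `0` corresponds to `v₁`, index `1` to `v₋₁`. -/
def Em (a b : Fin 2) : Matrix (Fin 2) (Fin 2) ℂ := Matrix.single a b 1

/-- The sign of a basis index: `v₁ ↦ 1`, `v₋₁ ↦ -1` (eigenvalue of `h`). -/
def sgn (a : Fin 2) : ℂ := if a = 0 then 1 else -1

/-- The elliptic dynamical R-matrix `R⁻(z,μ)` (with dynamical parameter `γ`). -/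
def Rminus (θ : ℂ → ℂ) (γ z μ : ℂ) : Matrix (Fin 2 × Fin 2) (Fin 2 × Fin 2) ℂ :=
  Em 0 0 ⊗ₖ Em 0 0 + Em 1 1 ⊗ₖ Em 1 1
    + (θ z / θ (z + γ)) • (Em 0 0 ⊗ₖ Em 1 1)
    + (θ (μ - γ) * θ (μ + γ) * θ z / (θ μ ^ 2 * θ (z + γ))) • (Em 1 1 ⊗ₖ Em 0 0)
    + (θ (z + μ) * θ γ / (θ (z + γ) * θ μ)) • (Em 0 1 ⊗ₖ Em 1 0)
    - (θ (z - μ) * θ γ / (θ (z + γ) * θ μ)) • (Em 1 0 ⊗ₖ Em 0 1)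

/-- The claimed derivative of `γ ↦ R⁻_γ(z,λ)` at `γ = 0`:
`(1/2)(θ′(z)/θ(z))(h⊗h − Id) + (θ(z+λ)/(θ(z)θ(λ))) e⊗f − (θ(z−λ)/(θ(z)θ(λ))) f⊗e`. -/
def rClassical (θ : ℂ → ℂ) (z lam : ℂ) : Matrix (Fin 2 × Fin 2) (Fin 2 × Fin 2) ℂ :=
  ((1 / 2 : ℂ) * (deriv θ z / θ z)) • ((Em 0 0 - Em 1 1) ⊗ₖ (Em 0 0 - Em 1 1) - 1)
    + (θ (z + lam) / (θ z * θ lam)) • (Em 0 1 ⊗ₖ Em 1 0)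
    - (θ (z - lam) / (θ z * θ lam)) • (Em 1 0 ⊗ₖ Em 0 1)

/-- Quasi-classical limit of `R⁻`: at `γ = 0` the matrix `R⁻_γ(z,λ)` equals the identity,
it is differentiable in `γ` at `0` (entrywise), its derivative at `γ = 0` is `rClassical`,
and `rClassical` is the classical elliptic dynamical r-matrix
`(1/2)(θ′/θ)(z) h⊗h + (θ(z+λ)/(θ(z)θ(λ))) e⊗f + (θ(z−λ)/(θ(z)θ(−λ))) f⊗e`
minus the scalar `(1/2)(θ′/θ)(z)·Id`. -/
theorem Rminus_quasiclassical_limit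
    (τ : ℂ) (hτ : 0 < τ.im) (θ : ℂ → ℂ) (hθ : IsTheta τ θ)
    (z lam : ℂ) (hz : z ∉ LatSet τ) (hlam : lam ∉ LatSet τ)
    (hzl : z + lam ∉ LatSet τ) (hzl' : z - lam ∉ LatSet τ) :
    Rminus θ 0 z lam = 1 ∧
    (∀ p q : Fin 2 × Fin 2,
      HasDerivAt (fun γ : ℂ => Rminus θ γ z lam p q) (rClassical θ z lam p q) 0) ∧
    rClassical θ z lam
      = ((1 / 2 : ℂ) * (deriv θ z / θ z)) • ((Em 0 0 - Em 1 1) ⊗ₖ (Em 0 0 - Em 1 1))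
          + (θ (z + lam) / (θ z * θ lam)) • (Em 0 1 ⊗ₖ Em 1 0)
          + (θ (z - lam) / (θ z * θ (-lam))) • (Em 1 0 ⊗ₖ Em 0 1)
          - ((1 / 2 : ℂ) * (deriv θ z / θ z)) • (1 : Matrix (Fin 2 × Fin 2) (Fin 2 × Fin 2) ℂ) := by
  have hτ0 : τ.im ≠ 0 := ne_of_gt hτ
  have hdiff : Differentiable ℂ θ := hθ.1
  have hd0 : deriv θ 0 = 1 := hθ.2.1
  have hzero : ∀ w, θ w = 0 ↔ w ∈ LatSet τ := hθ.2.2.1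
  have hθz : θ z ≠ 0 := fun h => hz ((hzero z).mp h)
  have hθlam : θ lam ≠ 0 := fun h => hlam ((hzero lam).mp h)
  have hθ0 : θ 0 = 0 := (hzero 0).mpr lat_zero
  have hodd : θ (-lam) = -θ lam := theta_odd τ hτ θ hθ hlam
  refine ⟨?_, ?_, ?_⟩
  · -- Rminus at γ = 0 is the identity
    have e1 : θ z / θ (z + 0) = 1 := by rw [add_zero, div_self hθz]
    have e2 : θ (lam - 0) * θ (lam + 0) * θ z / (θ lam ^ 2 * θ (z + 0)) = 1 := by
      rw [add_zero, sub_zero, add_zero, pow_two]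
      field_simp
    have e3 : θ (z + lam) * θ 0 / (θ (z + 0) * θ lam) = 0 := by rw [hθ0]; simp
    have e4 : θ (z - lam) * θ 0 / (θ (z + 0) * θ lam) = 0 := by rw [hθ0]; simp
    rw [Rminus, e1, e2, e3, e4, one_smul, one_smul, zero_smul, zero_smul, add_zero, sub_zero]
    ext ⟨p1, p2⟩ ⟨q1, q2⟩
    fin_cases p1 <;> fin_cases p2 <;> fin_cases q1 <;> fin_cases q2 <;>
      simp [Em, Matrix.add_apply, Matrix.kroneckerMap_apply, Matrix.single,
        Matrix.one_apply, Prod.ext_iff]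
  · -- entrywise derivative at γ = 0
    have Hγ : HasDerivAt θ 1 0 := by
      have := (hdiff 0).hasDerivAt; rwa [hd0] at this
    have Hz : HasDerivAt (fun γ : ℂ => θ (z + γ)) (deriv θ z) 0 := by
      have hg : HasDerivAt θ (deriv θ z) ((fun γ : ℂ => z + γ) 0) := by
        simpa using (hdiff (z + 0)).hasDerivAt
      have hf : HasDerivAt (fun γ : ℂ => z + γ) 1 0 := (hasDerivAt_id 0).const_add z
      simpa [Function.comp_def] using hg.comp 0 hf
    have Hlp : HasDerivAt (fun γ : ℂ => θ (lam + γ)) (deriv θ lam) 0 := by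
      have hg : HasDerivAt θ (deriv θ lam) ((fun γ : ℂ => lam + γ) 0) := by
        simpa using (hdiff (lam + 0)).hasDerivAt
      have hf : HasDerivAt (fun γ : ℂ => lam + γ) 1 0 := (hasDerivAt_id 0).const_add lam
      simpa [Function.comp_def] using hg.comp 0 hf
    have Hlm : HasDerivAt (fun γ : ℂ => θ (lam - γ)) (-deriv θ lam) 0 := by
      have hg : HasDerivAt θ (deriv θ lam) ((fun γ : ℂ => lam - γ) 0) := by
        simpa using (hdiff (lam - 0)).hasDerivAt
      have hf : HasDerivAt (fun γ : ℂ => lam - γ) (-1) 0 := (hasDerivAt_id 0).const_sub lam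
      simpa [Function.comp_def] using hg.comp 0 hf
    have hz0' : θ (z + 0) ≠ 0 := by simpa using hθz
    have hden0 : (fun γ : ℂ => θ (z + γ) * θ lam) 0 ≠ 0 := by
      simpa using mul_ne_zero hθz hθlam
    have hden0' : (fun γ : ℂ => θ lam ^ 2 * θ (z + γ)) 0 ≠ 0 := by
      simpa using mul_ne_zero (pow_ne_zero 2 hθlam) hθz
    have DA : HasDerivAt (fun γ : ℂ => θ z / θ (z + γ)) (-(1 / 2 * (deriv θ z / θ z) * 2)) 0 := by
      have := (hasDerivAt_const (0:ℂ) (θ z)).div Hz hz0'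
      refine this.congr_deriv ?_
      rw [add_zero]
      field_simp
      ring
    have DB : HasDerivAt (fun γ : ℂ => θ (z + lam) * θ γ / (θ (z + γ) * θ lam))
        (θ (z + lam) / (θ z * θ lam)) 0 := by
      have hnum : HasDerivAt (fun γ : ℂ => θ (z + lam) * θ γ) (θ (z + lam) * 1) 0 :=
        Hγ.const_mul (θ (z + lam))
      have hden : HasDerivAt (fun γ : ℂ => θ (z + γ) * θ lam) (deriv θ z * θ lam) 0 :=
        Hz.mul_const (θ lam)
      have := hnum.div hden hden0
      refine this.congr_deriv ?_
      simp only [add_zero, hθ0, mul_zero, zero_mul, mul_one, sub_zero, zero_div]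
      field_simp
    have DC : HasDerivAt (fun γ : ℂ => -(θ (z - lam) * θ γ / (θ (z + γ) * θ lam)))
        (-(θ (z - lam) / (θ z * θ lam))) 0 := by
      have hnum : HasDerivAt (fun γ : ℂ => θ (z - lam) * θ γ) (θ (z - lam) * 1) 0 :=
        Hγ.const_mul (θ (z - lam))
      have hden : HasDerivAt (fun γ : ℂ => θ (z + γ) * θ lam) (deriv θ z * θ lam) 0 :=
        Hz.mul_const (θ lam)
      have := (hnum.div hden hden0).neg
      refine this.congr_deriv ?_
      simp only [add_zero, hθ0, mul_zero, zero_mul, mul_one, sub_zero, zero_div]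
      field_simp
    have DD : HasDerivAt (fun γ : ℂ => θ (lam - γ) * θ (lam + γ) * θ z / (θ lam ^ 2 * θ (z + γ)))
        (-(1 / 2 * (deriv θ z / θ z) * 2)) 0 := by
      have hnum : HasDerivAt (fun γ : ℂ => θ (lam - γ) * θ (lam + γ) * θ z)
          ((-deriv θ lam * θ (lam + 0) + θ (lam - 0) * deriv θ lam) * θ z) 0 :=
        (Hlm.mul Hlp).mul_const (θ z)
      have hden : HasDerivAt (fun γ : ℂ => θ lam ^ 2 * θ (z + γ)) (θ lam ^ 2 * deriv θ z) 0 :=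
        Hz.const_mul (θ lam ^ 2)
      have := hnum.div hden hden0'
      refine this.congr_deriv ?_
      simp only [add_zero, sub_zero]
      field_simp
      ring
    rintro ⟨p1, p2⟩ ⟨q1, q2⟩
    fin_cases p1 <;> fin_cases p2 <;> fin_cases q1 <;> fin_cases q2 <;>
      simp only [Rminus, rClassical, Em, Matrix.add_apply, Matrix.sub_apply, Matrix.smul_apply,
        Matrix.kroneckerMap_apply, Matrix.single, Matrix.one_apply, Matrix.of_apply,
        smul_eq_mul, Prod.mk.injEq] <;>
      norm_num <;>
      first
        | exact hasDerivAt_const _ _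
        | exact DA
        | exact DB
        | exact DC
        | exact DD
  · -- rewriting the classical r-matrix
    rw [rClassical, hodd, smul_sub]
    rw [show θ (z - lam) / (θ z * -θ lam) = -(θ (z - lam) / (θ z * θ lam)) by
      rw [mul_neg, div_neg]]
    rw [neg_smul]
    abel
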